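/- arXiv:1911.06451 — 3 statements merged into one kernel-verified Lean document; each statement's English description precedes it below -/
import Mathlib

section
/- Let p, q ≥ 0 and let θ_1, …, θ_p and ρ_0, ρ_1, …, ρ_q be real numbers such that 1 − Σ_{i=1}^p θ_i z^i ≠ 0 for every complex z with |z| ≤ 1. Let S : [−π, π] → ℝ be integrable, nonnegative and even, and suppose there exist δ > 0 and c > 0 with S(ω) ≥ c for almost every ω with |ω| < δ. Define the ARMA transfer function T(ω) = |Σ_{j=0}^q ρ_j e^{−ijω}|² / |1 − Σ_{i=1}^p θ_i e^{−iiω}|² (which is continuous and bounded on [−π, π]). If ρ_0 = 1 − Σ_{i=1}^p θ_i − Σ_{j=1}^q ρ_j, then the generalized mean squared displacements satisfy lim_{n→∞} M_{T·S}(n) / M_S(n) = 1, where T·S denotes the pointwise product. -/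
open MeasureTheory Real Filter Finset

set_option maxHeartbeats 1000000

/-- The `n`-th Fejér kernel `F_n(ω) = Σ_{j=-(n-1)}^{n-1} (1 - |j|/n) e^{-ijω}`,
written in its (equal) real form via cosines. -/
noncomputable def fejerKernel (n : ℕ) (ω : ℝ) : ℝ :=
  ∑ j ∈ Finset.Icc (-(n : ℤ) + 1) ((n : ℤ) - 1), (1 - |(j : ℝ)| / n) * Real.cos (j * ω)

/-- The generalized mean squared displacement `M_S(n) = n ∫_{-π}^{π} F_n(ω) S(ω) dω`. -/
noncomputable def gmsd (S : ℝ → ℝ) (n : ℕ) : ℝ :=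
  n * ∫ ω in (-π)..π, fejerKernel n ω * S ω

/-- The ARMA(p,q) transfer function
`T(ω) = |Σ_{j=0}^q ρ_j e^{-ijω}|² / |1 - Σ_{i=1}^p θ_i e^{-iiω}|²`. -/
noncomputable def armaTransfer (p q : ℕ) (θ ρ : ℕ → ℝ) (ω : ℝ) : ℝ :=
  ‖∑ j ∈ Finset.range (q + 1),
      (ρ j : ℂ) * Complex.exp (-Complex.I * j * ω)‖ ^ 2 /
    ‖1 - ∑ i ∈ Finset.Icc 1 p,
      (θ i : ℂ) * Complex.exp (-Complex.I * i * ω)‖ ^ 2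

/-! ### Trigonometric identities for the Fejér kernel -/

lemma two_cos_mul_sin (A B : ℝ) :
    2 * Real.cos A * Real.sin B = Real.sin (A + B) - Real.sin (A - B) := by
  rw [Real.sin_add, Real.sin_sub]; ring

lemma sin_sq_sub_sin_sq (A B : ℝ) :
    Real.sin A ^ 2 - Real.sin B ^ 2 = Real.sin (A + B) * Real.sin (A - B) := by
  rw [Real.sin_add, Real.sin_sub]
  nlinarith [Real.sin_sq_add_cos_sq A, Real.sin_sq_add_cos_sq B]

lemma dirichlet (n : ℕ) (x : ℝ) :
    (∑ j ∈ Finset.Icc (-(n:ℤ)) (n:ℤ), Real.cos (j * (2 * x))) * Real.sin x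
      = Real.sin ((2 * n + 1) * x) := by
  induction n with
  | zero => simp
  | succ n ih =>
    have hs : Finset.Icc (-((n:ℤ)+1)) ((n:ℤ)+1)
        = insert (-((n:ℤ)+1)) (insert ((n:ℤ)+1) (Finset.Icc (-(n:ℤ)) (n:ℤ))) := by
      ext j; simp; omega
    have h1 : ¬ (-((n:ℤ)+1)) ∈ insert ((n:ℤ)+1) (Finset.Icc (-(n:ℤ)) (n:ℤ)) := by
      simp; omega
    have h2 : ¬ ((n:ℤ)+1) ∈ Finset.Icc (-(n:ℤ)) (n:ℤ) := by simp
    push_cast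
    rw [hs, Finset.sum_insert h1, Finset.sum_insert h2]
    have hc : Real.cos ((-((n:ℤ)+1):ℤ) * (2*x)) = Real.cos (((n:ℝ)+1) * (2*x)) := by
      push_cast
      rw [show (-((n:ℝ)+1)) * (2*x) = -(((n:ℝ)+1) * (2*x)) by ring, Real.cos_neg]
    push_cast at hc ⊢
    rw [hc]
    have h3 := two_cos_mul_sin (((n:ℝ)+1)*(2*x)) x
    rw [show ((n:ℝ)+1)*(2*x) + x = (2*((n:ℝ)+1)+1)*x by ring,
        show ((n:ℝ)+1)*(2*x) - x = (2*(n:ℝ)+1)*x by ring] at h3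
    nlinarith [ih, h3]

lemma fejer_identity (n : ℕ) (ω : ℝ) :
    (∑ j ∈ Finset.Icc (-(n:ℤ)+1) ((n:ℤ)-1), ((n:ℝ) - |(j:ℝ)|) * Real.cos (j * ω))
      * Real.sin (ω/2) ^ 2 = Real.sin (n * (ω/2)) ^ 2 := by
  induction n with
  | zero => simp
  | succ n ih =>
    have hsub : Finset.Icc (-(n:ℤ)+1) ((n:ℤ)-1) ⊆ Finset.Icc (-(n:ℤ)) (n:ℤ) := by
      intro j hj; simp at hj ⊢; omega
    have hf : ∀ j ∈ Finset.Icc (-(n:ℤ)) (n:ℤ), j ∉ Finset.Icc (-(n:ℤ)+1) ((n:ℤ)-1) →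
        ((n:ℝ) - |(j:ℝ)|) * Real.cos (j * ω) = 0 := by
      intro j hj hj2
      simp at hj hj2
      have hjn : j = -(n:ℤ) ∨ j = (n:ℤ) := by omega
      rcases hjn with h | h <;> · rw [h]; push_cast; simp
    have hGsucc : ∑ j ∈ Finset.Icc (-((n:ℤ)+1)+1) (((n:ℤ)+1)-1),
        (((n:ℝ)+1) - |(j:ℝ)|) * Real.cos (j * ω)
        = (∑ j ∈ Finset.Icc (-(n:ℤ)+1) ((n:ℤ)-1), ((n:ℝ) - |(j:ℝ)|) * Real.cos (j * ω))
          + ∑ j ∈ Finset.Icc (-(n:ℤ)) (n:ℤ), Real.cos (j * ω) := by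
      rw [show (-((n:ℤ)+1)+1) = -(n:ℤ) by ring, show (((n:ℤ)+1)-1) = (n:ℤ) by ring]
      rw [Finset.sum_subset hsub hf, ← Finset.sum_add_distrib]
      apply Finset.sum_congr rfl; intro j _; ring
    push_cast at hGsucc ⊢
    rw [hGsucc, add_mul, ih]
    have hd := dirichlet n (ω/2)
    simp only [show (2:ℝ)*(ω/2) = ω by ring] at hd
    have hs := sin_sq_sub_sin_sq (((n:ℝ)+1) * (ω/2)) ((n:ℝ) * (ω/2))
    rw [show ((n:ℝ)+1)*(ω/2) + (n:ℝ)*(ω/2) = (2*(n:ℝ)+1)*(ω/2) by ring,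
        show ((n:ℝ)+1)*(ω/2) - (n:ℝ)*(ω/2) = ω/2 by ring] at hs
    linear_combination hd * Real.sin (ω/2) - hs

lemma fejer_mul_identity (n : ℕ) (hn : 1 ≤ n) (ω : ℝ) :
    (n:ℝ) * fejerKernel n ω * Real.sin (ω/2) ^ 2 = Real.sin ((n:ℝ) * (ω/2)) ^ 2 := by
  have hne : (n:ℝ) ≠ 0 := by positivity
  have : (n:ℝ) * fejerKernel n ω
      = ∑ j ∈ Finset.Icc (-(n:ℤ)+1) ((n:ℤ)-1), ((n:ℝ) - |(j:ℝ)|) * Real.cos (j * ω) := by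
    rw [fejerKernel, Finset.mul_sum]
    apply Finset.sum_congr rfl; intro j _
    field_simp
  rw [this, fejer_identity]

lemma fejer_cont (n : ℕ) : Continuous (fejerKernel n) := by
  unfold fejerKernel
  exact continuous_finset_sum _ fun j _ => continuous_const.mul
    (Real.continuous_cos.comp (continuous_const.mul continuous_id))

lemma fejer_nonneg (n : ℕ) (hn : 1 ≤ n) (ω : ℝ) : 0 ≤ fejerKernel n ω := by
  rcases eq_or_ne (Real.sin (ω/2)) 0 with h0 | h0
  · rw [Real.sin_eq_zero_iff] at h0
    obtain ⟨k, hk⟩ := h0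
    have hω : ω = k * (2 * π) := by linarith [hk]
    apply Finset.sum_nonneg
    intro j hj
    simp only [Finset.mem_Icc] at hj
    have h1 : Real.cos (j * ω) = 1 := by
      rw [hω, show (j:ℝ) * ((k:ℝ) * (2*π)) = ((j*k : ℤ) : ℝ) * (2*π) by push_cast; ring]
      exact Real.cos_int_mul_two_pi _
    rw [h1, mul_one]
    have : |(j:ℝ)| ≤ (n:ℝ) := by
      rw [← Int.cast_abs]
      have : |j| ≤ (n:ℤ) := abs_le.mpr ⟨by omega, by omega⟩
      exact_mod_cast this
    have hnp : (0:ℝ) < n := by positivity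
    rw [sub_nonneg, div_le_one hnp]; exact this
  · have h2 : 0 < Real.sin (ω/2) ^ 2 := by positivity
    have h3 := fejer_mul_identity n hn ω
    nlinarith [sq_nonneg (Real.sin ((n:ℝ) * (ω/2))),
      mul_pos (show (0:ℝ) < n by positivity) h2]

lemma fejer_le (n : ℕ) (hn : 1 ≤ n) (ω : ℝ) (h : 0 < Real.sin (ω/2) ^ 2) :
    fejerKernel n ω ≤ 1 / ((n:ℝ) * Real.sin (ω/2) ^ 2) := by
  have h3 := fejer_mul_identity n hn ω
  have h4 : Real.sin ((n:ℝ) * (ω/2)) ^ 2 ≤ 1 := Real.sin_sq_le_one _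
  have hnp : (0:ℝ) < n := by positivity
  rw [le_div_iff₀ (by positivity)]
  nlinarith

lemma fejer_integral (n : ℕ) (hn : 1 ≤ n) :
    ∫ ω in (-π)..π, fejerKernel n ω = 2 * π := by
  unfold fejerKernel
  rw [intervalIntegral.integral_finset_sum
    (f := fun (j:ℤ) (ω:ℝ) => (1 - |(j:ℝ)|/(n:ℝ)) * Real.cos ((j:ℝ) * ω))
    (fun j _ => Continuous.intervalIntegrable (by fun_prop) _ _)]
  rw [Finset.sum_eq_single_of_mem 0 (by simp; omega)]
  · simp [intervalIntegral.integral_const]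
    ring
  · intro j _ hj
    have hne : (j:ℝ) ≠ 0 := Int.cast_ne_zero.mpr hj
    have : ∫ ω in (-π)..π, (1 - |(j:ℝ)|/n) * Real.cos (j * ω)
        = (1 - |(j:ℝ)|/n) * ∫ ω in (-π)..π, Real.cos ((j:ℝ) * ω) := by
      rw [← intervalIntegral.integral_const_mul]
    rw [this, intervalIntegral.integral_comp_mul_left Real.cos hne, integral_cos]
    rw [show (j:ℝ) * -π = ((-j : ℤ):ℝ) * π by push_cast; ring,
        show (j:ℝ) * π = ((j : ℤ):ℝ) * π from rfl]
    rw [Real.sin_int_mul_pi, Real.sin_int_mul_pi]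
    simp

lemma fejer_bound_away (n : ℕ) (hn : 1 ≤ n) (δ₁ : ℝ) (hδ₁ : 0 < δ₁) (hδπ : δ₁ ≤ π)
    (ω : ℝ) (h1 : δ₁ ≤ |ω|) (h2 : |ω| ≤ π) :
    fejerKernel n ω ≤ 1 / ((n:ℝ) * Real.sin (δ₁/2) ^ 2) := by
  have hπ := Real.pi_pos
  have hs0 : 0 < Real.sin (δ₁/2) := Real.sin_pos_of_pos_of_lt_pi (by linarith) (by linarith)
  have hmono : Real.sin (δ₁/2) ≤ Real.sin (|ω|/2) := by
    apply Real.strictMonoOn_sin.monotoneOn ⟨by linarith, by linarith⟩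
      ⟨by linarith [abs_nonneg ω], by linarith⟩ (by linarith)
  have hsq : Real.sin (ω/2)^2 = Real.sin (|ω|/2)^2 := by
    rcases abs_choice ω with h | h
    · rw [h]
    · rw [h, show -ω/2 = -(ω/2) by ring, Real.sin_neg]; ring
  have hpos : 0 < Real.sin (ω/2)^2 := by rw [hsq]; nlinarith
  refine (fejer_le n hn ω hpos).trans ?_
  have hle : Real.sin (δ₁/2)^2 ≤ Real.sin (ω/2)^2 := by rw [hsq]; nlinarith
  have hnp : (0:ℝ) < n := by positivity
  apply one_div_le_one_div_of_le (by positivity)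
  nlinarith

/-! ### The ARMA transfer function -/

lemma arma_denom_ne (p : ℕ) (θ : ℕ → ℝ)
    (hstat : ∀ z : ℂ, ‖z‖ ≤ 1 →
      1 - ∑ i ∈ Finset.Icc 1 p, (θ i : ℂ) * z ^ i ≠ 0) (ω : ℝ) :
    (1 - ∑ i ∈ Finset.Icc 1 p, (θ i : ℂ) * Complex.exp (-Complex.I * i * ω)) ≠ 0 := by
  have habs : ‖Complex.exp (-Complex.I * ω)‖ = 1 := by
    rw [Complex.norm_exp]; simp
  have h := hstat _ (le_of_eq habs)
  convert h using 3 with i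
  rw [← Complex.exp_nat_mul]
  ring_nf

lemma arma_cont (p q : ℕ) (θ ρ : ℕ → ℝ)
    (hstat : ∀ z : ℂ, ‖z‖ ≤ 1 →
      1 - ∑ i ∈ Finset.Icc 1 p, (θ i : ℂ) * z ^ i ≠ 0) :
    Continuous (armaTransfer p q θ ρ) := by
  unfold armaTransfer
  apply Continuous.div
  · exact (continuous_norm.comp (by fun_prop)).pow 2
  · exact (continuous_norm.comp (by fun_prop)).pow 2
  · intro ω
    have h := arma_denom_ne p θ hstat ω
    have := norm_ne_zero_iff.mpr h
    positivity

lemma arma_zero (p q : ℕ) (θ ρ : ℕ → ℝ)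
    (hstat : ∀ z : ℂ, ‖z‖ ≤ 1 →
      1 - ∑ i ∈ Finset.Icc 1 p, (θ i : ℂ) * z ^ i ≠ 0)
    (hρ0 : ρ 0 = 1 - ∑ i ∈ Finset.Icc 1 p, θ i - ∑ j ∈ Finset.Icc 1 q, ρ j) :
    armaTransfer p q θ ρ 0 = 1 := by
  have hrange : Finset.range (q+1) = insert 0 (Finset.Icc 1 q) := by
    ext j; simp; omega
  have hsum : ∑ j ∈ Finset.range (q+1), ρ j = 1 - ∑ i ∈ Finset.Icc 1 p, θ i := by
    rw [hrange, Finset.sum_insert (by simp)]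
    rw [hρ0]; ring
  unfold armaTransfer
  have he : ∀ k : ℕ, Complex.exp (-Complex.I * k * ((0:ℝ):ℂ)) = 1 := by
    intro k; simp
  simp only [he, mul_one]
  rw [show (∑ j ∈ Finset.range (q+1), ((ρ j : ℝ):ℂ))
      = ((∑ j ∈ Finset.range (q+1), ρ j : ℝ) : ℂ) by push_cast; rfl]
  rw [show ((1:ℂ) - ∑ i ∈ Finset.Icc 1 p, ((θ i : ℝ):ℂ))
      = ((1 - ∑ i ∈ Finset.Icc 1 p, θ i : ℝ) : ℂ) by push_cast; rfl]
  rw [hsum]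
  apply div_self
  have h1 := hstat 1 (by simp)
  simp only [one_pow, mul_one] at h1
  have h2 : ((1 - ∑ i ∈ Finset.Icc 1 p, θ i : ℝ) : ℂ) ≠ 0 := by
    intro hc
    apply h1
    push_cast at hc ⊢
    rw [sub_eq_zero] at hc ⊢
    exact_mod_cast hc
  have := norm_ne_zero_iff.mpr h2
  positivity

theorem arma_restriction_sufficient
    (p q : ℕ) (θ ρ : ℕ → ℝ)
    (hstat : ∀ z : ℂ, ‖z‖ ≤ 1 →
      1 - ∑ i ∈ Finset.Icc 1 p, (θ i : ℂ) * z ^ i ≠ 0)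
    (S : ℝ → ℝ)
    (hSint : IntegrableOn S (Set.Icc (-π) π))
    (hSnonneg : ∀ ω, 0 ≤ S ω)
    (hSeven : ∀ ω, S (-ω) = S ω)
    (hSpos : ∃ δ > (0 : ℝ), ∃ c > (0 : ℝ),
      ∀ᵐ ω : ℝ, |ω| < δ → c ≤ S ω)
    (hρ0 : ρ 0 = 1 - ∑ i ∈ Finset.Icc 1 p, θ i - ∑ j ∈ Finset.Icc 1 q, ρ j) :
    Tendsto (fun n : ℕ =>
        gmsd (fun ω => armaTransfer p q θ ρ ω * S ω) n / gmsd S n)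
      atTop (nhds 1) := by
  obtain ⟨δ, hδ, c, hc, hSc⟩ := hSpos
  set T := armaTransfer p q θ ρ with hTdef
  have hTc : Continuous T := arma_cont p q θ ρ hstat
  have hT0 : T 0 = 1 := arma_zero p q θ ρ hstat hρ0
  have hπ := Real.pi_pos
  set A : Set ℝ := Set.Ioc (-π) π with hA
  have hmA : MeasurableSet A := measurableSet_Ioc
  have hSA : IntegrableOn S A := hSint.mono_set Set.Ioc_subset_Icc_self
  have hIS0 : 0 ≤ ∫ ω in A, S ω := setIntegral_nonneg hmA (fun ω _ => hSnonneg ω)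
  obtain ⟨CT, hCT⟩ := isCompact_Icc.exists_bound_of_continuousOn
    (s := Set.Icc (-π) π) (f := fun ω => T ω - 1) (by fun_prop)
  have hCT0 : 0 ≤ CT := le_trans (norm_nonneg _) (hCT 0 ⟨by linarith, by linarith⟩)
  rw [Metric.tendsto_atTop]
  intro ε hε
  have hε4 : 0 < ε/4 := by linarith
  -- continuity of T at 0
  obtain ⟨δ₀, hδ₀, hTnear⟩ : ∃ δ₀ > 0, ∀ ω : ℝ, |ω| < δ₀ → |T ω - 1| < ε/4 := by
    obtain ⟨δ₀, hδ₀, h⟩ := Metric.continuousAt_iff.mp (hTc.continuousAt (x := 0)) (ε/4) hε4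
    refine ⟨δ₀, hδ₀, fun ω hω => ?_⟩
    have := h (x := ω) (by simpa [Real.dist_eq] using hω)
    simpa [Real.dist_eq, hT0] using this
  set δ₁ := min δ₀ (min δ π) with hδ₁def
  have hδ₁ : 0 < δ₁ := lt_min hδ₀ (lt_min hδ hπ)
  have hδ₁δ : δ₁ ≤ δ := le_trans (min_le_right _ _) (min_le_left _ _)
  have hδ₁π : δ₁ ≤ π := le_trans (min_le_right _ _) (min_le_right _ _)
  have hδ₁0 : δ₁ ≤ δ₀ := min_le_left _ _
  set s := Real.sin (δ₁/2)^2 with hsdef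
  have hs : 0 < s := by
    have := Real.sin_pos_of_pos_of_lt_pi (x := δ₁/2) (by linarith) (by linarith)
    positivity
  set B : Set ℝ := A ∩ Set.Ioo (-δ₁) δ₁ with hB
  have hmB : MeasurableSet B := hmA.inter measurableSet_Ioo
  have hBA : B ⊆ A := Set.inter_subset_left
  set K := CT * (∫ ω in A, S ω) / s with hK
  have hK0 : 0 ≤ K := by positivity
  obtain ⟨N0, hN0⟩ := exists_nat_ge ((2*π*c/s + max 1 (K/(ε/4)))/(2*π*c))
  refine ⟨max N0 1, fun n hn => ?_⟩
  have hn1 : 1 ≤ n := le_trans (le_max_right _ _) hn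
  have hnN0 : (N0:ℝ) ≤ (n:ℝ) := by exact_mod_cast le_trans (le_max_left _ _) hn
  have hnpos : (0:ℝ) < n := by exact_mod_cast hn1
  -- integrability facts
  obtain ⟨CF, hCF⟩ := isCompact_Icc.exists_bound_of_continuousOn
    (s := Set.Icc (-π) π) ((fejer_cont n).continuousOn)
  have hFmeas : AEStronglyMeasurable (fejerKernel n) (volume.restrict A) :=
    (fejer_cont n).aestronglyMeasurable.restrict
  have hFSA : IntegrableOn (fun ω => fejerKernel n ω * S ω) A := by
    apply hSA.bdd_mul hFmeas
    exact (ae_restrict_iff' hmA).mpr (ae_of_all _ fun ω hω => hCF ω (Set.Ioc_subset_Icc_self hω))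
  obtain ⟨CD, hCD⟩ := isCompact_Icc.exists_bound_of_continuousOn
    (s := Set.Icc (-π) π) (f := fun ω => fejerKernel n ω * (T ω - 1))
    (((fejer_cont n).mul (hTc.sub continuous_const)).continuousOn)
  have hgdA : IntegrableOn (fun ω => fejerKernel n ω * (T ω - 1) * S ω) A := by
    apply hSA.bdd_mul (((fejer_cont n).mul (hTc.sub continuous_const)).aestronglyMeasurable.restrict)
    exact (ae_restrict_iff' hmA).mpr (ae_of_all _ fun ω hω => hCD ω (Set.Ioc_subset_Icc_self hω))
  have hFA : IntegrableOn (fejerKernel n) A := (fejer_cont n).integrableOn_Ioc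
  -- Fejér kernel integrals
  have key1 : ∫ ω in A, fejerKernel n ω = 2*π := by
    have := fejer_integral n hn1
    rwa [intervalIntegral.integral_of_le (by linarith)] at this
  have hABbound : ∀ ω ∈ A \ B, ‖fejerKernel n ω‖ ≤ 1/((n:ℝ)*s) := by
    intro ω hω
    obtain ⟨hωA, hωB⟩ := hω
    have h1 : δ₁ ≤ |ω| := by
      by_contra h; push_neg at h; exact hωB ⟨hωA, abs_lt.mp h⟩
    have h2 : |ω| ≤ π := abs_le.mpr ⟨by linarith [hωA.1], hωA.2⟩
    rw [Real.norm_eq_abs, abs_of_nonneg (fejer_nonneg n hn1 ω)]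
    exact fejer_bound_away n hn1 δ₁ hδ₁ hδ₁π ω h1 h2
  have hvolA : volume A = ENNReal.ofReal (2*π) := by
    rw [hA, Real.volume_Ioc]; congr 1; ring
  have hμAB : volume (A\B) < ⊤ :=
    lt_of_le_of_lt (measure_mono Set.diff_subset) (by rw [hvolA]; exact ENNReal.ofReal_lt_top)
  have htoAB : (volume (A\B)).toReal ≤ 2*π := by
    have hle : volume (A\B) ≤ volume A := measure_mono Set.diff_subset
    calc (volume (A\B)).toReal ≤ (volume A).toReal :=
          ENNReal.toReal_mono (by rw [hvolA]; exact ENNReal.ofReal_ne_top) hle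
      _ = 2*π := by rw [hvolA, ENNReal.toReal_ofReal (by positivity)]
  have key2 : ∫ ω in A\B, fejerKernel n ω ≤ 1/((n:ℝ)*s) * (2*π) := by
    have hb := norm_setIntegral_le_of_norm_le_const hμAB hABbound
    calc ∫ ω in A\B, fejerKernel n ω ≤ ‖∫ ω in A\B, fejerKernel n ω‖ := le_abs_self _
      _ ≤ 1/((n:ℝ)*s) * (volume (A\B)).toReal := hb
      _ ≤ 1/((n:ℝ)*s) * (2*π) := mul_le_mul_of_nonneg_left htoAB (by positivity)
  have hsplitF : ∫ ω in A, fejerKernel n ω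
      = (∫ ω in B, fejerKernel n ω) + ∫ ω in A\B, fejerKernel n ω := by
    rw [← setIntegral_union Set.disjoint_sdiff_right (hmA.diff hmB)
      (hFA.mono_set hBA) (hFA.mono_set Set.diff_subset), Set.union_diff_cancel hBA]
  have key3 : 2*π - 1/((n:ℝ)*s) * (2*π) ≤ ∫ ω in B, fejerKernel n ω := by
    linarith [key1, key2, hsplitF]
  -- lower bound on gmsd S n
  have hScB : ∀ᵐ ω ∂(volume.restrict B), fejerKernel n ω * c ≤ fejerKernel n ω * S ω := by
    filter_upwards [ae_restrict_mem hmB, ae_restrict_of_ae hSc] with ω hωB hcS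
    have : |ω| < δ := lt_of_lt_of_le (abs_lt.mpr ⟨hωB.2.1, hωB.2.2⟩) hδ₁δ
    exact mul_le_mul_of_nonneg_left (hcS this) (fejer_nonneg n hn1 ω)
  have hBS : (∫ ω in B, fejerKernel n ω) * c ≤ ∫ ω in B, fejerKernel n ω * S ω := by
    rw [← integral_mul_const]
    exact integral_mono_ae ((hFA.mono_set hBA).mul_const c) (hFSA.mono_set hBA) hScB
  have hBS2 : ∫ ω in B, fejerKernel n ω * S ω ≤ ∫ ω in A, fejerKernel n ω * S ω := by
    apply setIntegral_mono_set hFSA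
      (ae_of_all _ fun ω => mul_nonneg (fejer_nonneg n hn1 ω) (hSnonneg ω))
      hBA.eventuallyLE
  have hgmsdS : gmsd S n = (n:ℝ) * ∫ ω in A, fejerKernel n ω * S ω := by
    rw [gmsd, intervalIntegral.integral_of_le (by linarith)]
  have hml : 2*π*c*(n:ℝ) - 2*π*c/s ≤ gmsd S n := by
    have h1 : (2*π - 1/((n:ℝ)*s) * (2*π)) * c ≤ ∫ ω in B, fejerKernel n ω * S ω :=
      le_trans (mul_le_mul_of_nonneg_right key3 hc.le) hBS
    have h2 : (2*π - 1/((n:ℝ)*s) * (2*π)) * c ≤ ∫ ω in A, fejerKernel n ω * S ω :=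
      le_trans h1 hBS2
    have h3 : (n:ℝ) * ((2*π - 1/((n:ℝ)*s) * (2*π)) * c)
        ≤ (n:ℝ) * ∫ ω in A, fejerKernel n ω * S ω :=
      mul_le_mul_of_nonneg_left h2 hnpos.le
    rw [hgmsdS]
    refine le_trans (le_of_eq ?_) h3
    field_simp
  have hmax : max 1 (K/(ε/4)) ≤ gmsd S n := by
    have : 2*π*c/s + max 1 (K/(ε/4)) ≤ 2*π*c*(N0:ℝ) := by
      rw [div_le_iff₀ (by positivity)] at hN0
      linarith [hN0]
    have h4 : 2*π*c*(N0:ℝ) ≤ 2*π*c*(n:ℝ) :=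
      mul_le_mul_of_nonneg_left hnN0 (by positivity)
    linarith
  have hm1 : 1 ≤ gmsd S n := le_trans (le_max_left _ _) hmax
  have hmK : K/(ε/4) ≤ gmsd S n := le_trans (le_max_right _ _) hmax
  have hm0 : 0 < gmsd S n := lt_of_lt_of_le one_pos hm1
  -- difference bound
  have hTS_split : gmsd (fun ω => T ω * S ω) n
      = gmsd S n + (n:ℝ) * ∫ ω in A, fejerKernel n ω * (T ω - 1) * S ω := by
    rw [gmsd, intervalIntegral.integral_of_le (by linarith), hgmsdS]
    have hcongr : ∫ ω in A, fejerKernel n ω * (T ω * S ω)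
        = ∫ ω in A, (fejerKernel n ω * S ω + fejerKernel n ω * (T ω - 1) * S ω) := by
      apply integral_congr_ae
      exact ae_of_all _ fun ω => by ring
    rw [hcongr, integral_add hFSA hgdA]
    ring
  have hdB : ∫ ω in B, |fejerKernel n ω * (T ω - 1) * S ω|
      ≤ (ε/4) * ∫ ω in A, fejerKernel n ω * S ω := by
    have hstep : ∫ ω in B, |fejerKernel n ω * (T ω - 1) * S ω|
        ≤ ∫ ω in B, (ε/4) * (fejerKernel n ω * S ω) := by
      apply setIntegral_mono_on ((hgdA.mono_set hBA).abs)
        ((hFSA.mono_set hBA).const_mul (ε/4)) hmB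
      intro ω hω
      have hω1 : |ω| < δ₁ := abs_lt.mpr ⟨hω.2.1, hω.2.2⟩
      have hT1 : |T ω - 1| ≤ ε/4 := (hTnear ω (lt_of_lt_of_le hω1 hδ₁0)).le
      rw [abs_mul, abs_mul, abs_of_nonneg (fejer_nonneg n hn1 ω), abs_of_nonneg (hSnonneg ω)]
      calc fejerKernel n ω * |T ω - 1| * S ω
          ≤ fejerKernel n ω * (ε/4) * S ω :=
            mul_le_mul_of_nonneg_right
              (mul_le_mul_of_nonneg_left hT1 (fejer_nonneg n hn1 ω)) (hSnonneg ω)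
        _ = ε/4 * (fejerKernel n ω * S ω) := by ring
    rw [integral_const_mul] at hstep
    exact le_trans hstep (mul_le_mul_of_nonneg_left hBS2 hε4.le)
  have hdAB : ∫ ω in A\B, |fejerKernel n ω * (T ω - 1) * S ω|
      ≤ CT * (1/((n:ℝ)*s)) * ∫ ω in A, S ω := by
    have hstep : ∫ ω in A\B, |fejerKernel n ω * (T ω - 1) * S ω|
        ≤ ∫ ω in A\B, CT * (1/((n:ℝ)*s)) * S ω := by
      apply setIntegral_mono_on ((hgdA.mono_set Set.diff_subset).abs)
        ((hSA.mono_set Set.diff_subset).const_mul _) (hmA.diff hmB)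
      intro ω hω
      have hF := hABbound ω hω
      rw [Real.norm_eq_abs, abs_of_nonneg (fejer_nonneg n hn1 ω)] at hF
      have hT1 : |T ω - 1| ≤ CT := by
        have := hCT ω (Set.Ioc_subset_Icc_self hω.1)
        rwa [Real.norm_eq_abs] at this
      rw [abs_mul, abs_mul, abs_of_nonneg (fejer_nonneg n hn1 ω), abs_of_nonneg (hSnonneg ω)]
      calc fejerKernel n ω * |T ω - 1| * S ω
          ≤ (1/((n:ℝ)*s) * CT) * S ω := by
            apply mul_le_mul_of_nonneg_right _ (hSnonneg ω)
            exact mul_le_mul hF hT1 (abs_nonneg _) (by positivity)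
        _ = CT * (1/((n:ℝ)*s)) * S ω := by ring
    refine le_trans hstep ?_
    rw [integral_const_mul]
    apply mul_le_mul_of_nonneg_left _ (by positivity)
    exact setIntegral_mono_set hSA (ae_of_all _ fun ω => hSnonneg ω)
      Set.diff_subset.eventuallyLE
  have hdsplit := setIntegral_union (μ := volume)
    (f := fun ω => |fejerKernel n ω * (T ω - 1) * S ω|)
    Set.disjoint_sdiff_right (hmA.diff hmB)
    ((hgdA.mono_set hBA).abs) ((hgdA.mono_set Set.diff_subset).abs)
  rw [Set.union_diff_cancel hBA] at hdsplit
  have hdsplit' : ∫ ω in A, |fejerKernel n ω * (T ω - 1) * S ω|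
      = (∫ ω in B, |fejerKernel n ω * (T ω - 1) * S ω|)
        + ∫ ω in A\B, |fejerKernel n ω * (T ω - 1) * S ω| := by simpa using hdsplit
  have habs : |∫ ω in A, fejerKernel n ω * (T ω - 1) * S ω|
      ≤ (ε/4) * (∫ ω in A, fejerKernel n ω * S ω) + CT * (1/((n:ℝ)*s)) * ∫ ω in A, S ω := by
    calc |∫ ω in A, fejerKernel n ω * (T ω - 1) * S ω|
        ≤ ∫ ω in A, |fejerKernel n ω * (T ω - 1) * S ω| := by
          simpa only [Real.norm_eq_abs] using
            norm_integral_le_integral_norm (μ := volume.restrict A)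
              (f := fun ω => fejerKernel n ω * (T ω - 1) * S ω)
      _ ≤ _ := by rw [hdsplit']; linarith [hdB, hdAB]
  have hdiff : |gmsd (fun ω => T ω * S ω) n - gmsd S n| ≤ (ε/4) * gmsd S n + K := by
    rw [hTS_split]
    have h8 : |(n:ℝ) * ∫ ω in A, fejerKernel n ω * (T ω - 1) * S ω|
        ≤ (n:ℝ) * ((ε/4) * (∫ ω in A, fejerKernel n ω * S ω) + CT * (1/((n:ℝ)*s)) * ∫ ω in A, S ω) := by
      rw [abs_mul, abs_of_nonneg hnpos.le]
      exact mul_le_mul_of_nonneg_left habs hnpos.le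
    have h9 : (n:ℝ) * ((ε/4) * (∫ ω in A, fejerKernel n ω * S ω)
        + CT * (1/((n:ℝ)*s)) * ∫ ω in A, S ω) = (ε/4) * gmsd S n + K := by
      have habstract : ∀ I1 I2 : ℝ, (n:ℝ) * ((ε/4) * I1 + CT * (1/((n:ℝ)*s)) * I2)
          = (ε/4) * ((n:ℝ) * I1) + CT * I2 / s := by
        intro I1 I2
        field_simp [ne_of_gt hs, ne_of_gt hnpos]
      rw [hgmsdS, hK]
      exact habstract (∫ ω in A, fejerKernel n ω * S ω) (∫ ω in A, S ω)
    simp only [add_sub_cancel_left]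
    rw [← h9]
    exact h8
  -- conclusion
  have hKle : K ≤ (ε/4) * gmsd S n := by
    rw [div_le_iff₀ hε4] at hmK
    linarith
  have hfinal : |gmsd (fun ω => T ω * S ω) n - gmsd S n| ≤ (ε/2) * gmsd S n := by
    linarith
  rw [Real.dist_eq]
  have hrw : gmsd (fun ω => T ω * S ω) n / gmsd S n - 1
      = (gmsd (fun ω => T ω * S ω) n - gmsd S n) / gmsd S n := by
    field_simp
  rw [hrw, abs_div, abs_of_pos hm0, div_lt_iff₀ hm0]
  calc |gmsd (fun ω => T ω * S ω) n - gmsd S n| ≤ (ε/2) * gmsd S n := hfinal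
    _ < ε * gmsd S n := by nlinarith
end

section
/- Let 0 < α < 2, τ > 0, and let t, u be real numbers with t ≥ τ and u ≥ τ. Then (1/(2τ²)) ∫_0^τ ∫_0^τ [ (t − s)^α + (u − v)^α − |(t − u) − (s − v)|^α ] ds dv = h_τ(t) + h_τ(u) − g_τ(t − u), where h_τ(x) = (x^{α+1} − (x − τ)^{α+1}) / (2τ(α + 1)) and g_τ(x) = (|x + τ|^{α+2} + |x − τ|^{α+2} − 2|x|^{α+2}) / (2τ²(α + 1)(α + 2)). -/
open Real intervalIntegral

lemma continuous_abs_rpow {α : ℝ} (hα : 0 < α) :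
    Continuous (fun x : ℝ => |x| ^ α) :=
  (Real.continuous_rpow_const hα.le).comp continuous_abs

-- derivative of x ↦ x * |x|^α is (α+1)|x|^α
lemma hasDerivAt_mul_abs_rpow {α : ℝ} (hα : 0 < α) (y : ℝ) :
    HasDerivAt (fun x : ℝ => x * |x| ^ α) ((α + 1) * |y| ^ α) y := by
  rcases lt_trichotomy y 0 with hy | hy | hy
  · have h2 : HasDerivAt (fun x : ℝ => (-x) ^ (α + 1))
        ((α + 1) * (-y) ^ (α + 1 - 1) * (-1)) y :=
      (Real.hasDerivAt_rpow_const (p := α + 1) (Or.inl (by linarith))).comp y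
        ((hasDerivAt_id y).neg)
    have h1 : HasDerivAt (fun x : ℝ => -((-x) ^ (α + 1))) ((α + 1) * |y| ^ α) y := by
      refine h2.neg.congr_deriv ?_
      rw [add_sub_cancel_right, abs_of_neg hy]; ring
    apply h1.congr_of_eventuallyEq
    filter_upwards [eventually_lt_nhds hy] with x hx
    rw [abs_of_neg hx, Real.rpow_add (by linarith) α 1, Real.rpow_one]
    ring
  · subst hy
    have hval : (α + 1) * |(0:ℝ)| ^ α = 0 := by
      rw [abs_zero, Real.zero_rpow hα.ne', mul_zero]
    rw [hval, hasDerivAt_iff_tendsto_slope]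
    have hcont : Filter.Tendsto (fun x : ℝ => |x| ^ α) (nhdsWithin 0 {(0:ℝ)}ᶜ) (nhds 0) := by
      have := (continuous_abs_rpow hα).tendsto 0
      rw [abs_zero, Real.zero_rpow hα.ne'] at this
      exact this.mono_left nhdsWithin_le_nhds
    apply hcont.congr'
    filter_upwards [self_mem_nhdsWithin] with x hx
    have hx0 : x ≠ 0 := hx
    simp [slope, hx0]
  · have h2 : HasDerivAt (fun x : ℝ => x ^ (α + 1))
        ((α + 1) * y ^ (α + 1 - 1)) y :=
      Real.hasDerivAt_rpow_const (p := α + 1) (Or.inl hy.ne')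
    have h1 : HasDerivAt (fun x : ℝ => x ^ (α + 1)) ((α + 1) * |y| ^ α) y := by
      convert h2 using 2
      rw [add_sub_cancel_right, abs_of_pos hy]
    apply h1.congr_of_eventuallyEq
    filter_upwards [eventually_gt_nhds hy] with x hx
    rw [abs_of_pos hx, Real.rpow_add hx α 1, Real.rpow_one]
    ring

-- derivative of x ↦ |x|^(α+2) is (α+2) * (x * |x|^α)
lemma hasDerivAt_abs_rpow_two {α : ℝ} (hα : 0 < α) (y : ℝ) :
    HasDerivAt (fun x : ℝ => |x| ^ (α + 2)) ((α + 2) * (y * |y| ^ α)) y := by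
  have h1 : HasDerivAt (fun x : ℝ => x * (x * |x| ^ α))
      (1 * (y * |y| ^ α) + y * ((α + 1) * |y| ^ α)) y :=
    (hasDerivAt_id y).mul (hasDerivAt_mul_abs_rpow hα y)
  have h2 : HasDerivAt (fun x : ℝ => x * (x * |x| ^ α)) ((α + 2) * (y * |y| ^ α)) y := by
    convert h1 using 1; ring
  apply h2.congr_of_eventuallyEq
  apply Filter.Eventually.of_forall
  intro x
  rcases eq_or_ne x 0 with rfl | hx
  · simp [Real.zero_rpow (by positivity : α + 2 ≠ 0)]
  · have habs : (0:ℝ) < |x| := abs_pos.mpr hx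
    show |x| ^ (α + 2) = x * (x * |x| ^ α)
    rw [show α + 2 = 2 + α by ring, Real.rpow_add habs 2 α,
      show (2:ℝ) = ((2:ℕ):ℝ) by norm_num, Real.rpow_natCast, sq_abs]
    ring

lemma int_abs_sub {α : ℝ} (hα : 0 < α) (a b c : ℝ) :
    ∫ s in a..b, |c - s| ^ α
      = ((c - a) * |c - a| ^ α - (c - b) * |c - b| ^ α) / (α + 1) := by
  have key : ∀ x ∈ Set.uIcc a b,
      HasDerivAt (fun s : ℝ => -((c - s) * |c - s| ^ α / (α + 1))) (|c - x| ^ α) x := by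
    intro x _
    have h1 : HasDerivAt (fun s : ℝ => (c - s) * |c - s| ^ α)
        ((α + 1) * |c - x| ^ α * (-1)) x :=
      (hasDerivAt_mul_abs_rpow hα (c - x)).comp x
        (by simpa using (hasDerivAt_id x).const_sub c)
    refine (h1.div_const (α + 1)).neg.congr_deriv ?_
    field_simp [(by linarith : (0:ℝ) < α + 1).ne']
  have hint : IntervalIntegrable (fun s : ℝ => |c - s| ^ α) MeasureTheory.volume a b :=
    ((continuous_abs_rpow hα).comp (continuous_const.sub continuous_id)).intervalIntegrable a b
  rw [intervalIntegral.integral_eq_sub_of_hasDerivAt key hint]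
  ring

lemma int_abs_add {α : ℝ} (hα : 0 < α) (a b c : ℝ) :
    ∫ v in a..b, |c + v| ^ α
      = ((c + b) * |c + b| ^ α - (c + a) * |c + a| ^ α) / (α + 1) := by
  have key : ∀ x ∈ Set.uIcc a b,
      HasDerivAt (fun v : ℝ => (c + v) * |c + v| ^ α / (α + 1)) (|c + x| ^ α) x := by
    intro x _
    have h1 : HasDerivAt (fun v : ℝ => (c + v) * |c + v| ^ α)
        ((α + 1) * |c + x| ^ α * 1) x :=
      (hasDerivAt_mul_abs_rpow hα (c + x)).comp x
        (by simpa using (hasDerivAt_id x).const_add c)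
    refine (h1.div_const (α + 1)).congr_deriv ?_
    field_simp [(by linarith : (0:ℝ) < α + 1).ne']
  have hint : IntervalIntegrable (fun v : ℝ => |c + v| ^ α) MeasureTheory.volume a b :=
    ((continuous_abs_rpow hα).comp (continuous_const.add continuous_id)).intervalIntegrable a b
  rw [intervalIntegral.integral_eq_sub_of_hasDerivAt key hint]
  ring

lemma int_mul_abs_sub {α : ℝ} (hα : 0 < α) (a b c : ℝ) :
    ∫ s in a..b, (c - s) * |c - s| ^ α
      = (|c - a| ^ (α + 2) - |c - b| ^ (α + 2)) / (α + 2) := by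
  have key : ∀ x ∈ Set.uIcc a b,
      HasDerivAt (fun s : ℝ => -(|c - s| ^ (α + 2) / (α + 2)))
        ((c - x) * |c - x| ^ α) x := by
    intro x _
    have h1 : HasDerivAt (fun s : ℝ => |c - s| ^ (α + 2))
        ((α + 2) * ((c - x) * |c - x| ^ α) * (-1)) x :=
      (hasDerivAt_abs_rpow_two hα (c - x)).comp x
        (by simpa using (hasDerivAt_id x).const_sub c)
    refine (h1.div_const (α + 2)).neg.congr_deriv ?_
    field_simp [(by linarith : (0:ℝ) < α + 2).ne']
  have hint : IntervalIntegrable (fun s : ℝ => (c - s) * |c - s| ^ α)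
      MeasureTheory.volume a b := by
    apply Continuous.intervalIntegrable
    exact (continuous_const.sub continuous_id).mul
      ((continuous_abs_rpow hα).comp (continuous_const.sub continuous_id))
  rw [intervalIntegral.integral_eq_sub_of_hasDerivAt key hint]
  ring

lemma mul_abs_rpow_of_nonneg {α x : ℝ} (hα : 0 < α) (hx : 0 ≤ x) :
    x * |x| ^ α = x ^ (α + 1) := by
  rcases eq_or_lt_of_le hx with rfl | hx
  · rw [Real.zero_rpow (by positivity), zero_mul]
  · rw [abs_of_pos hx, Real.rpow_add hx, Real.rpow_one]; ring
theorem fbm_time_average_covariance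
    (α τ : ℝ) (hα : 0 < α) (hα2 : α < 2) (hτ : 0 < τ)
    (t u : ℝ) (ht : τ ≤ t) (hu : τ ≤ u) :
    (1 / (2 * τ ^ 2)) *
      ∫ s in (0:ℝ)..τ, ∫ v in (0:ℝ)..τ,
        ((t - s) ^ α + (u - v) ^ α - |(t - u) - (s - v)| ^ α) =
    ((t ^ (α + 1) - (t - τ) ^ (α + 1)) / (2 * τ * (α + 1)) +
     (u ^ (α + 1) - (u - τ) ^ (α + 1)) / (2 * τ * (α + 1)) -
     (|(t - u) + τ| ^ (α + 2) + |(t - u) - τ| ^ (α + 2) - 2 * |t - u| ^ (α + 2)) /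
       (2 * τ ^ 2 * (α + 1) * (α + 2))) := by
  have hα1 : (0:ℝ) < α + 1 := by linarith
  have hα2' : (0:ℝ) < α + 2 := by linarith
  have inner : ∀ s ∈ Set.uIcc (0:ℝ) τ,
      (∫ v in (0:ℝ)..τ, ((t - s) ^ α + (u - v) ^ α - |(t - u) - (s - v)| ^ α))
      = τ * |t - s| ^ α
        + (u * |u| ^ α - (u - τ) * |u - τ| ^ α) / (α + 1)
        - ((t - u + τ - s) * |t - u + τ - s| ^ α
            - (t - u - s) * |t - u - s| ^ α) / (α + 1) := by
    intro s hs
    rw [Set.uIcc_of_le hτ.le] at hs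
    have step1 : (∫ v in (0:ℝ)..τ, ((t - s) ^ α + (u - v) ^ α - |(t - u) - (s - v)| ^ α))
        = ∫ v in (0:ℝ)..τ, (|t - s| ^ α + |u - v| ^ α - |(t - u - s) + v| ^ α) := by
      apply intervalIntegral.integral_congr
      intro v hv
      rw [Set.uIcc_of_le hτ.le] at hv
      have h1 : (0:ℝ) ≤ t - s := by linarith [hs.2]
      have h2 : (0:ℝ) ≤ u - v := by linarith [hv.2]
      have h3 : (t - u) - (s - v) = (t - u - s) + v := by ring
      simp only [abs_of_nonneg h1, abs_of_nonneg h2, h3]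
    have i2 : IntervalIntegrable (fun v : ℝ => |(t - u - s) + v| ^ α)
        MeasureTheory.volume 0 τ :=
      ((continuous_abs_rpow hα).comp (continuous_const.add continuous_id)).intervalIntegrable 0 τ
    have i3 : IntervalIntegrable (fun _ : ℝ => |t - s| ^ α) MeasureTheory.volume 0 τ :=
      intervalIntegrable_const
    have i4 : IntervalIntegrable (fun v : ℝ => |u - v| ^ α) MeasureTheory.volume 0 τ :=
      ((continuous_abs_rpow hα).comp (continuous_const.sub continuous_id)).intervalIntegrable 0 τ
    rw [step1, intervalIntegral.integral_sub (i3.add i4) i2,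
      intervalIntegral.integral_add i3 i4, intervalIntegral.integral_const,
      int_abs_sub hα 0 τ u, int_abs_add hα 0 τ (t - u - s)]
    rw [show t - u - s + τ = t - u + τ - s by ring]
    simp [smul_eq_mul]
  have houter : (∫ s in (0:ℝ)..τ, ∫ v in (0:ℝ)..τ,
      ((t - s) ^ α + (u - v) ^ α - |(t - u) - (s - v)| ^ α))
      = ∫ s in (0:ℝ)..τ,
        (τ * |t - s| ^ α
          + (u * |u| ^ α - (u - τ) * |u - τ| ^ α) / (α + 1)
          - ((t - u + τ - s) * |t - u + τ - s| ^ α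
              - (t - u - s) * |t - u - s| ^ α) / (α + 1)) :=
    intervalIntegral.integral_congr fun s hs => inner s hs
  have j1 : IntervalIntegrable (fun s : ℝ => τ * |t - s| ^ α) MeasureTheory.volume 0 τ :=
    (continuous_const.mul
      ((continuous_abs_rpow hα).comp (continuous_const.sub continuous_id))).intervalIntegrable 0 τ
  have j2 : IntervalIntegrable
      (fun _ : ℝ => (u * |u| ^ α - (u - τ) * |u - τ| ^ α) / (α + 1))
      MeasureTheory.volume 0 τ := intervalIntegrable_const
  have cmul : ∀ c : ℝ, Continuous (fun s : ℝ => (c - s) * |c - s| ^ α) := fun c =>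
    (continuous_const.sub continuous_id).mul
      ((continuous_abs_rpow hα).comp (continuous_const.sub continuous_id))
  have j3 : IntervalIntegrable
      (fun s : ℝ => ((t - u + τ - s) * |t - u + τ - s| ^ α
        - (t - u - s) * |t - u - s| ^ α) / (α + 1))
      MeasureTheory.volume 0 τ :=
    (((cmul (t - u + τ)).sub (cmul (t - u))).div_const (α + 1)).intervalIntegrable 0 τ
  have k1 : IntervalIntegrable (fun s : ℝ => (t - u + τ - s) * |t - u + τ - s| ^ α)
      MeasureTheory.volume 0 τ := (cmul (t - u + τ)).intervalIntegrable 0 τ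
  have k2 : IntervalIntegrable (fun s : ℝ => (t - u - s) * |t - u - s| ^ α)
      MeasureTheory.volume 0 τ := (cmul (t - u)).intervalIntegrable 0 τ
  rw [houter, intervalIntegral.integral_sub (j1.add j2) j3,
    intervalIntegral.integral_add j1 j2, intervalIntegral.integral_const_mul,
    int_abs_sub hα 0 τ t, intervalIntegral.integral_const,
    intervalIntegral.integral_div, intervalIntegral.integral_sub k1 k2,
    int_mul_abs_sub hα 0 τ (t - u + τ), int_mul_abs_sub hα 0 τ (t - u)]
  rw [show t - u + τ - τ = t - u by ring]
  have e1 : t * |t| ^ α = t ^ (α + 1) :=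
    mul_abs_rpow_of_nonneg hα (le_trans hτ.le ht)
  have e2 : (t - τ) * |t - τ| ^ α = (t - τ) ^ (α + 1) :=
    mul_abs_rpow_of_nonneg hα (by linarith)
  have e3 : u * |u| ^ α = u ^ (α + 1) :=
    mul_abs_rpow_of_nonneg hα (le_trans hτ.le hu)
  have e4 : (u - τ) * |u - τ| ^ α = (u - τ) ^ (α + 1) :=
    mul_abs_rpow_of_nonneg hα (by linarith)
  rw [sub_zero, sub_zero, sub_zero, e1, e2, e3, e4, smul_eq_mul]
  rw [show (t - u) + τ = t - u + τ from rfl]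
  field_simp
  ring
end

section
/- Let V be an N×N real symmetric positive definite matrix, F an N×d real matrix of full column rank d, and Y an N×k real matrix with N > 0. Define β̂ = (Fᵀ V^{−1} F)^{−1} Fᵀ V^{−1} Y and Σ̂ = (1/N)·(Y − Fβ̂)ᵀ V^{−1} (Y − Fβ̂), and assume Σ̂ is positive definite. Then for every d×k real matrix β and every k×k real symmetric positive definite matrix Σ, tr( Σ^{−1} (Y − Fβ)ᵀ V^{−1} (Y − Fβ) ) + N·log det Σ ≥ N·k + N·log det Σ̂. -/
open Matrix Real

section Aux

variable {n : Type*} [Fintype n] [DecidableEq n]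

open scoped MatrixOrder

lemma aux_trace_nonneg {A : Matrix n n ℝ} (hA : A.PosSemidef) : 0 ≤ A.trace := by
  apply Finset.sum_nonneg
  intro i _
  simpa using hA.dotProduct_mulVec_nonneg (Pi.single i 1)

lemma aux_trace_mul_nonneg {A B : Matrix n n ℝ} (hA : A.PosSemidef) (hB : B.PosSemidef) :
    0 ≤ (A * B).trace := by
  have h1 : A * B = CFC.sqrt A * (CFC.sqrt A * B) := by
    rw [← mul_assoc, CFC.sqrt_mul_sqrt_self A hA.nonneg]
  rw [h1, Matrix.trace_mul_comm]
  have h2 : CFC.sqrt A * B * CFC.sqrt A = (CFC.sqrt A)ᴴ * B * CFC.sqrt A := by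
    rw [(CFC.sqrt_nonneg A).posSemidef.1]
  rw [h2]
  exact aux_trace_nonneg (hB.conjTranspose_mul_mul_same (CFC.sqrt A))

lemma aux_posDef_conj {B S : Matrix n n ℝ} (hB : B.PosDef) (hS : IsUnit S.det) :
    (Sᵀ * B * S).PosDef := by
  refine PosDef.of_dotProduct_mulVec_pos ?_ (fun x hx => ?_)
  · have := Matrix.isHermitian_conjTranspose_mul_mul S hB.1
    simpa [Matrix.conjTranspose_eq_transpose_of_trivial] using this
  · have hSx : S *ᵥ x ≠ 0 := by
      intro h
      apply hx
      have h2 := congrArg (fun v => S⁻¹ *ᵥ v) h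
      simpa [Matrix.mulVec_mulVec, Matrix.nonsing_inv_mul S hS] using h2
    have h3 := hB.dotProduct_mulVec_pos hSx
    have key : dotProduct x ((Sᵀ * B * S) *ᵥ x)
        = dotProduct (S *ᵥ x) (B *ᵥ (S *ᵥ x)) := by
      rw [← Matrix.mulVec_mulVec, ← Matrix.mulVec_mulVec, Matrix.dotProduct_mulVec,
        Matrix.vecMul_transpose]
    simpa [key] using h3

lemma aux_trace_eq_sum_eigenvalues {A : Matrix n n ℝ} (hA : A.IsHermitian) :
    A.trace = ∑ i, hA.eigenvalues i := by
  simpa using hA.trace_eq_sum_eigenvalues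

lemma aux_key_ineq {A : Matrix n n ℝ} (hA : A.PosDef) :
    (Fintype.card n : ℝ) + Real.log A.det ≤ A.trace := by
  have hev : ∀ i, 0 < hA.1.eigenvalues i := hA.eigenvalues_pos
  have htr : A.trace = ∑ i, hA.1.eigenvalues i := aux_trace_eq_sum_eigenvalues hA.1
  have hdet : A.det = ∏ i, hA.1.eigenvalues i := by
    simpa using hA.1.det_eq_prod_eigenvalues
  rw [htr, hdet, Real.log_prod (fun i _ => (hev i).ne')]
  have hsum : ∑ i, Real.log (hA.1.eigenvalues i) ≤ ∑ i, (hA.1.eigenvalues i - 1) := by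
    apply Finset.sum_le_sum
    intro i _
    exact Real.log_le_sub_one_of_pos (hev i)
  have : ∑ i, (hA.1.eigenvalues i - 1) = (∑ i, hA.1.eigenvalues i) - Fintype.card n := by
    rw [Finset.sum_sub_distrib]
    simp [Finset.card_univ]
  linarith [hsum, this.le, this.ge]

lemma aux_step2 {Sig SigHat : Matrix n n ℝ} (hSig : Sig.PosDef) (hSH : SigHat.PosDef) :
    (Fintype.card n : ℝ) + Real.log SigHat.det - Real.log Sig.det ≤ (Sig⁻¹ * SigHat).trace := by
  set S := CFC.sqrt SigHat with hSdef
  have hSsq : S * S = SigHat := CFC.sqrt_mul_sqrt_self SigHat hSH.posSemidef.nonneg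
  have hSherm : Sᴴ = S := (CFC.sqrt_nonneg SigHat).posSemidef.1
  have hSt : Sᵀ = S := by
    rw [← Matrix.conjTranspose_eq_transpose_of_trivial, hSherm]
  have hdetS : S.det * S.det = SigHat.det := by rw [← Matrix.det_mul, hSsq]
  have hdetSu : IsUnit S.det := by
    rcases eq_or_ne S.det 0 with h | h
    · exfalso
      have h2 := hSH.det_pos
      rw [← hdetS, h, zero_mul] at h2
      exact lt_irrefl _ h2
    · exact isUnit_iff_ne_zero.2 h
  have hA : (Sᵀ * Sig⁻¹ * S).PosDef := aux_posDef_conj hSig.inv hdetSu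
  have htr : (Sᵀ * Sig⁻¹ * S).trace = (Sig⁻¹ * SigHat).trace := by
    rw [hSt, Matrix.trace_mul_cycle, hSsq, Matrix.trace_mul_comm]
  have hdetinv : (Sig⁻¹).det = (Sig.det)⁻¹ := by
    rw [Matrix.det_nonsing_inv, Ring.inverse_eq_inv']
  have hdetA : (Sᵀ * Sig⁻¹ * S).det = SigHat.det / Sig.det := by
    rw [hSt, Matrix.det_mul, Matrix.det_mul, hdetinv, div_eq_mul_inv, ← hdetS]
    ring
  have hlog : Real.log ((Sᵀ * Sig⁻¹ * S).det)
      = Real.log SigHat.det - Real.log Sig.det := by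
    rw [hdetA, Real.log_div (ne_of_gt hSH.det_pos) (ne_of_gt hSig.det_pos)]
  have hkey := aux_key_ineq hA
  rw [hlog, htr] at hkey
  linarith

end Aux

theorem matrix_normal_profile_likelihood_optimum
    (N d k : ℕ) (hN : 0 < N)
    (V : Matrix (Fin N) (Fin N) ℝ) (hV : V.PosDef)
    (F : Matrix (Fin N) (Fin d) ℝ) (hF : F.rank = d)
    (Y : Matrix (Fin N) (Fin k) ℝ)
    (betaHat : Matrix (Fin d) (Fin k) ℝ)
    (hbetaHat : betaHat = (Fᵀ * V⁻¹ * F)⁻¹ * Fᵀ * V⁻¹ * Y)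
    (SigHat : Matrix (Fin k) (Fin k) ℝ)
    (hSigHat : SigHat = (N : ℝ)⁻¹ • ((Y - F * betaHat)ᵀ * V⁻¹ * (Y - F * betaHat)))
    (hSigHatPD : SigHat.PosDef) :
    ∀ (β : Matrix (Fin d) (Fin k) ℝ) (Sig : Matrix (Fin k) (Fin k) ℝ),
      Sig.PosDef →
      (N : ℝ) * k + N * Real.log SigHat.det ≤
        Matrix.trace (Sig⁻¹ * (Y - F * β)ᵀ * V⁻¹ * (Y - F * β)) +
          N * Real.log Sig.det := by
  intro β Sig hSig
  have hNne : (N : ℝ) ≠ 0 := Nat.cast_ne_zero.2 hN.ne'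
  set W := V⁻¹ with hWdef
  have hW : W.PosDef := hV.inv
  have hWt : Wᵀ = W := by
    rw [← Matrix.conjTranspose_eq_transpose_of_trivial, hW.1]
  -- injectivity of mulVec F
  have hFinj : Function.Injective F.mulVecLin := by
    rw [← LinearMap.ker_eq_bot]
    have h1 := LinearMap.finrank_range_add_finrank_ker F.mulVecLin
    rw [Module.finrank_fin_fun] at h1
    have h2 : Module.finrank ℝ (LinearMap.range F.mulVecLin) = d := hF
    rw [h2] at h1
    have h3 : Module.finrank ℝ (LinearMap.ker F.mulVecLin) = 0 := by omega
    exact Submodule.finrank_eq_zero.1 h3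
  -- G := Fᵀ W F is positive definite
  have hGpd : (Fᵀ * W * F).PosDef := by
    refine PosDef.of_dotProduct_mulVec_pos ?_ (fun x hx => ?_)
    · have := Matrix.isHermitian_conjTranspose_mul_mul F hW.1
      simpa [Matrix.conjTranspose_eq_transpose_of_trivial] using this
    · have hFx : F *ᵥ x ≠ 0 := by
        intro h
        apply hx
        have h2 : F.mulVecLin x = F.mulVecLin 0 := by
          simpa [Matrix.mulVecLin_apply] using h
        exact hFinj h2
      have h3 := hW.dotProduct_mulVec_pos hFx
      have key : dotProduct x ((Fᵀ * W * F) *ᵥ x)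
          = dotProduct (F *ᵥ x) (W *ᵥ (F *ᵥ x)) := by
        rw [← Matrix.mulVec_mulVec, ← Matrix.mulVec_mulVec, Matrix.dotProduct_mulVec,
          Matrix.vecMul_transpose]
      simpa [key] using h3
  have hGu : IsUnit (Fᵀ * W * F).det := isUnit_iff_ne_zero.2 (ne_of_gt hGpd.det_pos)
  -- residual
  set R := Y - F * betaHat with hRdef
  have hFR : Fᵀ * W * R = 0 := by
    have h1 : Fᵀ * W * (F * betaHat) = Fᵀ * W * Y := by
      rw [hbetaHat]
      calc Fᵀ * W * (F * ((Fᵀ * W * F)⁻¹ * Fᵀ * W * Y))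
          = (Fᵀ * W * F) * (Fᵀ * W * F)⁻¹ * (Fᵀ * W * Y) := by
            simp only [Matrix.mul_assoc]
        _ = Fᵀ * W * Y := by
            rw [Matrix.mul_nonsing_inv _ hGu, Matrix.one_mul]
    rw [hRdef, Matrix.mul_sub, h1, sub_self]
  set D := F * (betaHat - β) with hDdef
  have hdecomp : Y - F * β = R + D := by
    rw [hRdef, hDdef, Matrix.mul_sub]
    abel
  have hDWR : Dᵀ * W * R = 0 := by
    rw [hDdef, Matrix.transpose_mul]
    calc (betaHat - β)ᵀ * Fᵀ * W * R = (betaHat - β)ᵀ * (Fᵀ * W * R) := by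
          simp only [Matrix.mul_assoc]
      _ = 0 := by rw [hFR, Matrix.mul_zero]
  have hRWD : Rᵀ * W * D = 0 := by
    have h1 : (Rᵀ * W * D)ᵀ = Dᵀ * W * R := by
      calc (Rᵀ * W * D)ᵀ = Dᵀ * (Rᵀ * W)ᵀ := Matrix.transpose_mul _ _
        _ = Dᵀ * (Wᵀ * Rᵀᵀ) := by rw [show (Rᵀ * W)ᵀ = Wᵀ * Rᵀᵀ from Matrix.transpose_mul _ _]
        _ = Dᵀ * W * R := by rw [Matrix.transpose_transpose, hWt, Matrix.mul_assoc]
    have h2 : (Rᵀ * W * D)ᵀ = 0 := by rw [h1, hDWR]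
    calc Rᵀ * W * D = ((Rᵀ * W * D)ᵀ)ᵀ := by rw [Matrix.transpose_transpose]
      _ = 0 := by rw [h2, Matrix.transpose_zero]
  have hsplit : (Y - F * β)ᵀ * W * (Y - F * β) = Rᵀ * W * R + Dᵀ * W * D := by
    rw [hdecomp, Matrix.transpose_add]
    rw [Matrix.add_mul, Matrix.add_mul, Matrix.mul_add, Matrix.mul_add]
    rw [hDWR, hRWD]
    abel
  -- Rᵀ W R = N • SigHat
  have hRWR : Rᵀ * W * R = (N : ℝ) • SigHat := by
    rw [hSigHat, smul_smul, mul_inv_cancel₀ hNne, one_smul, hWdef]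
  -- trace of the D part is nonneg
  have hSiginv : (Sig⁻¹).PosDef := hSig.inv
  have hDpart : 0 ≤ (Sig⁻¹ * (Dᵀ * W * D)).trace := by
    apply aux_trace_mul_nonneg hSiginv.posSemidef
    have hWps : W.PosSemidef := hW.posSemidef
    have := hWps.conjTranspose_mul_mul_same D
    simpa [Matrix.conjTranspose_eq_transpose_of_trivial] using this
  -- step 2
  have hstep2 : (k : ℝ) + Real.log SigHat.det - Real.log Sig.det
      ≤ (Sig⁻¹ * SigHat).trace := by
    have := aux_step2 hSig hSigHatPD
    simpa using this
  -- assemble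
  have htr : Matrix.trace (Sig⁻¹ * (Y - F * β)ᵀ * V⁻¹ * (Y - F * β))
      = (N : ℝ) * (Sig⁻¹ * SigHat).trace + (Sig⁻¹ * (Dᵀ * W * D)).trace := by
    have h0 : Sig⁻¹ * (Y - F * β)ᵀ * V⁻¹ * (Y - F * β)
        = Sig⁻¹ * ((Y - F * β)ᵀ * W * (Y - F * β)) := by
      rw [hWdef]
      simp only [Matrix.mul_assoc]
    rw [h0, hsplit, Matrix.mul_add, Matrix.trace_add, hRWR]
    rw [Matrix.mul_smul, Matrix.trace_smul]
    simp
  rw [htr]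
  nlinarith [hDpart, hstep2, (Nat.cast_pos (α := ℝ)).2 hN]
end
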